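/- arXiv:1205.3584 — 3 statements merged into one kernel-verified Lean document; each statement's English description precedes it below -/
import Mathlib

section
/- Let S : ℝⁿ → ℝ be a polynomial and F an n×n symmetric real matrix of formal parameters. Consider the formal power series equation in ε: S'(x) = S(x) + ε Sᵢ(x) Fᵢⱼ Sⱼ(x), where Sᵢ = ∂S/∂xᵢ. Then there exists a formal power series field redefinition x'ᵢ = xᵢ + ε Δᵢⱼ(x,ε) Sⱼ(x), with Δ symmetric and determined recursively by Δ = F - (ε/2)·(higher order corrections), such that S'(x) = S(x') as formal power series in ε. In particular, to first order in ε the choice Δᵢⱼ = Fᵢⱼ works: S(x + εF∇S(x)) = S(x) + ε⟨∇S, F∇S⟩ + O(ε²). -/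
open Asymptotics

namespace FieldRedef

open Polynomial

variable {n : ℕ}

/-- The coordinates after the redefinition, as polynomials in `ε`:
`Y x v m i = x i + ∑_{j<m} ε^{j+1} v_j i`. -/
noncomputable def Y (x : Fin n → ℝ) (v : ℕ → Fin n → ℝ) (m : ℕ) : Fin n → ℝ[X] :=
  fun i => C (x i) + ∑ j ∈ Finset.range m, X ^ (j+1) * C (v j i)

lemma Y_coeff_zero (x : Fin n → ℝ) (v : ℕ → Fin n → ℝ) (m : ℕ) (i : Fin n) :
    ((Y x v m) i).coeff 0 = x i := by
  simp [Y, coeff_zero_eq_eval_zero, eval_finset_sum]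

lemma Y_eval (x : Fin n → ℝ) (v : ℕ → Fin n → ℝ) (m : ℕ) (i : Fin n) (t : ℝ) :
    ((Y x v m) i).eval t = x i + ∑ j ∈ Finset.range m, t ^ (j+1) * v j i := by
  simp only [Y, eval_add, eval_C, eval_finset_sum, eval_mul, eval_pow, eval_X]

lemma eval_aeval (t : ℝ) (y : Fin n → ℝ[X]) (p : MvPolynomial (Fin n) ℝ) :
    (MvPolynomial.aeval y p).eval t = MvPolynomial.eval (fun i => (y i).eval t) p := by
  induction p using MvPolynomial.induction_on with
  | C a => simp
  | add p q hp hq => simp [hp, hq]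
  | mul_X p i hp => simp [hp]

lemma coeff_zero_aeval' (y : Fin n → ℝ[X]) (p : MvPolynomial (Fin n) ℝ)
    (x : Fin n → ℝ) (hy : ∀ i, (y i).coeff 0 = x i) :
    (MvPolynomial.aeval y p).coeff 0 = MvPolynomial.eval x p := by
  rw [coeff_zero_eq_eval_zero, eval_aeval]
  exact congrArg (fun z => MvPolynomial.eval z p)
    (funext fun i => by rw [← coeff_zero_eq_eval_zero]; exact hy i)

/-- Formal linear coefficient of `P` at `x` in direction `w`. -/
noncomputable def Lf (x w : Fin n → ℝ) (p : MvPolynomial (Fin n) ℝ) : ℝ :=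
  (MvPolynomial.aeval (fun i => C (x i) + X * C (w i)) p).coeff 1

/-- Key linearization lemma: adding `X^M • w` to the argument changes the value by a
multiple of `X^M`, whose `M`-th coefficient is the (argument-independent) linear form. -/
lemma lin (x w : Fin n → ℝ) (p : MvPolynomial (Fin n) ℝ) :
    ∀ M : ℕ, 1 ≤ M → ∀ y : Fin n → ℝ[X], (∀ i, (y i).coeff 0 = x i) →
      X ^ M ∣ (MvPolynomial.aeval (fun i => y i + X ^ M * C (w i)) p - MvPolynomial.aeval y p) ∧
      (MvPolynomial.aeval (fun i => y i + X ^ M * C (w i)) p - MvPolynomial.aeval y p).coeff M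
        = Lf x w p := by
  induction p using MvPolynomial.induction_on with
  | C a =>
    intro M hM y hy
    simp [Lf, MvPolynomial.aeval_C]
  | add p q hp hq =>
    intro M hM y hy
    obtain ⟨hp1, hp2⟩ := hp M hM y hy
    obtain ⟨hq1, hq2⟩ := hq M hM y hy
    have hsplit : (MvPolynomial.aeval (fun i => y i + X ^ M * C (w i)) (p + q)
          - MvPolynomial.aeval y (p + q))
        = (MvPolynomial.aeval (fun i => y i + X ^ M * C (w i)) p - MvPolynomial.aeval y p)
          + (MvPolynomial.aeval (fun i => y i + X ^ M * C (w i)) q - MvPolynomial.aeval y q) := by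
      simp only [map_add]; ring
    constructor
    · rw [hsplit]; exact dvd_add hp1 hq1
    · rw [hsplit, coeff_add, hp2, hq2]
      simp only [Lf, map_add, coeff_add]
  | mul_X p i hp =>
    intro M hM y hy
    obtain ⟨hdvd, hco⟩ := hp M hM y hy
    obtain ⟨e, he⟩ := hdvd
    set A := MvPolynomial.aeval (fun i => y i + X ^ M * C (w i)) p with hA
    set B := MvPolynomial.aeval y p with hB
    have hBc : B.coeff 0 = MvPolynomial.eval x p := coeff_zero_aeval' y p x hy
    have key : MvPolynomial.aeval (fun i => y i + X ^ M * C (w i)) (p * MvPolynomial.X i)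
        - MvPolynomial.aeval y (p * MvPolynomial.X i)
        = X ^ M * (e * y i) + X ^ M * (B * C (w i)) + X ^ M * (X ^ M * (e * C (w i))) := by
      simp only [map_mul, MvPolynomial.aeval_X, ← hA, ← hB]
      have : A = B + X ^ M * e := by rw [← he]; ring
      rw [this]; ring
    constructor
    · rw [key]
      exact dvd_add (dvd_add (Dvd.intro _ rfl) (Dvd.intro _ rfl)) (Dvd.intro _ rfl)
    · have hXco : ∀ q : ℝ[X], (X ^ M * q).coeff M = q.coeff 0 := fun q => by
        simpa using coeff_X_pow_mul q M 0
      have hec : e.coeff 0 = Lf x w p := by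
        rw [← hco, he, hXco]
      have hy0 : (X ^ M * (e * C (w i))).coeff 0 = 0 := by
        rw [coeff_zero_eq_eval_zero]
        simp [zero_pow (Nat.one_le_iff_ne_zero.mp hM)]
      have hq0 : (MvPolynomial.aeval (fun i => C (x i) + X * C (w i)) p).coeff 0
          = MvPolynomial.eval x p := by
        refine coeff_zero_aeval' _ p x fun i => ?_
        simp
      have hLf : Lf x w (p * MvPolynomial.X i) = Lf x w p * x i + MvPolynomial.eval x p * w i := by
        simp only [Lf, map_mul, MvPolynomial.aeval_X]
        have expand : (MvPolynomial.aeval (fun i => C (x i) + X * C (w i)) p)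
            * (C (x i) + X * C (w i))
            = (MvPolynomial.aeval (fun i => C (x i) + X * C (w i)) p) * C (x i)
              + ((MvPolynomial.aeval (fun i => C (x i) + X * C (w i)) p) * C (w i)) * X := by
          ring
        rw [expand, coeff_add, coeff_mul_C, coeff_mul_X, mul_coeff_zero, coeff_C, hq0]
        simp
      rw [key, coeff_add, coeff_add, hXco, hXco, hXco, hLf, mul_coeff_zero, mul_coeff_zero,
        hec, hBc, hy0, hy i, coeff_C]
      simp

lemma Lf_eq_grad (P : MvPolynomial (Fin n) ℝ) (S : (Fin n → ℝ) → ℝ)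
    (hP : ∀ z, S z = MvPolynomial.eval z P) (x w : Fin n → ℝ) :
    Lf x w P = ∑ i, w i * (fderiv ℝ S x) (Pi.single i 1) := by
  have hSfun : S = fun z => MvPolynomial.eval z P := funext hP
  have hdiff : DifferentiableAt ℝ S x := by
    rw [hSfun]
    exact ((AnalyticOnNhd.eval_mvPolynomial (𝕜 := ℝ) P) x trivial).differentiableAt
  set q : ℝ[X] := MvPolynomial.aeval (fun i => C (x i) + X * C (w i)) P with hq
  have hfun : (fun t : ℝ => q.eval t) = fun t : ℝ => S (x + t • w) := by
    funext t
    rw [hq, eval_aeval, hSfun]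
    have harg : (fun i => Polynomial.eval t (C (x i) + X * C (w i))) = x + t • w := by
      funext i
      simp only [eval_add, eval_C, eval_mul, eval_X, Pi.add_apply, Pi.smul_apply,
        smul_eq_mul, mul_comm]
    rw [harg]
  have h1 : deriv (fun t : ℝ => q.eval t) 0 = q.coeff 1 := by
    rw [Polynomial.deriv, ← coeff_zero_eq_eval_zero, coeff_derivative]
    simp
  have h2 : HasDerivAt (fun t : ℝ => x + t • w) w 0 := by
    have : HasDerivAt (fun t : ℝ => t • w) ((1:ℝ) • w) 0 := (hasDerivAt_id 0).smul_const w
    simpa using this.const_add x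
  have hx0 : x + (0:ℝ) • w = x := by simp
  have h3 : HasDerivAt (fun t : ℝ => S (x + t • w)) (fderiv ℝ S x w) 0 := by
    have hf : HasFDerivAt S (fderiv ℝ S x) (x + (0:ℝ) • w) := by
      rw [hx0]; exact hdiff.hasFDerivAt
    exact hf.comp_hasDerivAt 0 h2
  have h4 : fderiv ℝ S x w = ∑ i, w i * (fderiv ℝ S x) (Pi.single i 1) := by
    have hw : w = ∑ i : Fin n, w i • (Pi.single i 1 : Fin n → ℝ) := by
      funext j
      simp [Pi.single_apply, Finset.sum_ite_eq']
    conv_lhs => rw [hw]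
    rw [map_sum]
    exact Finset.sum_congr rfl fun i _ => by simp
  rw [Lf, ← hq, ← h1, hfun, h3.deriv, h4]

lemma dvd_isBigO {q : ℝ[X]} {M : ℕ} (h : X ^ M ∣ q) :
    (fun ε : ℝ => q.eval ε) =O[nhds 0] fun ε : ℝ => ε ^ M := by
  obtain ⟨r, rfl⟩ := h
  have h1 : (fun ε : ℝ => r.eval ε) =O[nhds 0] (fun _ : ℝ => (1:ℝ)) :=
    ((r.continuous_aeval).tendsto 0).isBigO_one ℝ
  have h2 := (isBigO_refl (fun ε : ℝ => ε ^ M) (nhds 0)).mul h1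
  simpa using h2

/-- target polynomial `S(x) + ⟨∇S, F ∇S⟩ ε`. -/
noncomputable def T (P : MvPolynomial (Fin n) ℝ) (F : Matrix (Fin n) (Fin n) ℝ)
    (x g : Fin n → ℝ) : ℝ[X] :=
  C (MvPolynomial.eval x P) + C (∑ i, g i * F.mulVec g i) * X

noncomputable def step (P : MvPolynomial (Fin n) ℝ) (F : Matrix (Fin n) (Fin n) ℝ)
    (x g : Fin n → ℝ) (prev : ℕ → Fin n → ℝ) : ℕ → Fin n → ℝ
  | 0 => F.mulVec g
  | (m+1) =>
      (((T P F x g - MvPolynomial.aeval (Y x prev (m+1)) P).coeff (m+2))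
        / (∑ i, g i * g i)) • g

noncomputable def vc (P : MvPolynomial (Fin n) ℝ) (F : Matrix (Fin n) (Fin n) ℝ)
    (x g : Fin n → ℝ) : ℕ → ℕ → Fin n → ℝ
  | 0 => fun _ => 0
  | (m+1) => fun k => if k = m then step P F x g (vc P F x g m) m else vc P F x g m k

noncomputable def v (P : MvPolynomial (Fin n) ℝ) (F : Matrix (Fin n) (Fin n) ℝ)
    (x g : Fin n → ℝ) (m : ℕ) : Fin n → ℝ :=
  step P F x g (vc P F x g m) m

lemma vc_eq (P : MvPolynomial (Fin n) ℝ) (F : Matrix (Fin n) (Fin n) ℝ) (x g : Fin n → ℝ) :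
    ∀ m k, k < m → vc P F x g m k = v P F x g k := by
  intro m
  induction m with
  | zero => intro k hk; omega
  | succ m ih =>
    intro k hk
    by_cases h : k = m
    · subst h
      simp [vc, v]
    · have : k < m := by omega
      simp only [vc, if_neg h]
      exact ih k this

lemma Y_vc (P : MvPolynomial (Fin n) ℝ) (F : Matrix (Fin n) (Fin n) ℝ) (x g : Fin n → ℝ)
    (m : ℕ) : Y x (vc P F x g m) m = Y x (v P F x g) m := by
  funext i
  simp only [Y]
  congr 1
  refine Finset.sum_congr rfl fun j hj => ?_
  rw [vc_eq P F x g m j (Finset.mem_range.mp hj)]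

lemma T_coeff_zero (P : MvPolynomial (Fin n) ℝ) (F : Matrix (Fin n) (Fin n) ℝ)
    (x g : Fin n → ℝ) : (T P F x g).coeff 0 = MvPolynomial.eval x P := by
  simp [T, coeff_C]

lemma T_coeff_one (P : MvPolynomial (Fin n) ℝ) (F : Matrix (Fin n) (Fin n) ℝ)
    (x g : Fin n → ℝ) : (T P F x g).coeff 1 = ∑ i, g i * F.mulVec g i := by
  simp [T, coeff_C]

lemma main_dvd (P : MvPolynomial (Fin n) ℝ) (F : Matrix (Fin n) (Fin n) ℝ)
    (x g : Fin n → ℝ) (hQ : (∑ i, g i * g i) ≠ 0)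
    (hLf : ∀ w : Fin n → ℝ, Lf x w P = ∑ i, w i * g i) (m : ℕ) :
    X ^ (m+2) ∣ (MvPolynomial.aeval (Y x (v P F x g) (m+1)) P - T P F x g) := by
  induction m with
  | zero =>
    rw [X_pow_dvd_iff]
    intro d hd
    have hY1 : Y x (v P F x g) 1 = fun i => C (x i) + X * C (v P F x g 0 i) := by
      funext i
      simp [Y, Finset.sum_range_one]
    interval_cases d
    · rw [coeff_sub, coeff_zero_aeval' _ _ x (Y_coeff_zero x _ 1), T_coeff_zero, sub_self]
    · rw [coeff_sub, T_coeff_one, hY1]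
      have h1 : (MvPolynomial.aeval
          (fun i => C (x i) + X * C (v P F x g 0 i)) P).coeff 1 = Lf x (v P F x g 0) P := rfl
      rw [h1, hLf]
      have hv0 : v P F x g 0 = F.mulVec g := rfl
      rw [hv0, sub_eq_zero]
      exact Finset.sum_congr rfl fun i _ => mul_comm _ _
  | succ m ih =>
    have hsplit : Y x (v P F x g) (m+2)
        = fun i => Y x (v P F x g) (m+1) i + X ^ (m+2) * C (v P F x g (m+1) i) := by
      funext i
      simp only [Y, Finset.sum_range_succ]
      ring
    obtain ⟨hD1, hD2⟩ := lin x (v P F x g (m+1)) P (m+2) (by omega) (Y x (v P F x g) (m+1))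
      (Y_coeff_zero x _ (m+1))
    rw [← hsplit] at hD1 hD2
    have hv : v P F x g (m+1)
        = (((T P F x g - MvPolynomial.aeval (Y x (v P F x g) (m+1)) P).coeff (m+2))
            / (∑ i, g i * g i)) • g := by
      show step P F x g (vc P F x g (m+1)) (m+1) = _
      rw [step, Y_vc]
    have hsum : Lf x (v P F x g (m+1)) P
        = (T P F x g - MvPolynomial.aeval (Y x (v P F x g) (m+1)) P).coeff (m+2) := by
      rw [hLf, hv]
      simp only [Pi.smul_apply, smul_eq_mul]
      rw [show ∀ c : ℝ, ∑ i, c * g i * g i = c * ∑ i, g i * g i from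
        fun c => by rw [Finset.mul_sum]; exact Finset.sum_congr rfl fun i _ => by ring]
      exact div_mul_cancel₀ _ hQ
    rw [X_pow_dvd_iff]
    intro d hd
    have hE : MvPolynomial.aeval (Y x (v P F x g) (m+2)) P - T P F x g
        = (MvPolynomial.aeval (Y x (v P F x g) (m+1)) P - T P F x g)
          + (MvPolynomial.aeval (Y x (v P F x g) (m+2)) P
              - MvPolynomial.aeval (Y x (v P F x g) (m+1)) P) := by ring
    rw [hE, coeff_add]
    rcases Nat.lt_succ_iff_lt_or_eq.mp hd with hlt | heq
    · rw [X_pow_dvd_iff.mp ih d hlt, X_pow_dvd_iff.mp hD1 d hlt, add_zero]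
    · subst heq
      rw [hD2, hsum, coeff_sub, coeff_sub]
      ring

lemma vecMulVec_mulVec (g : Fin n → ℝ) :
    (Matrix.vecMulVec g g).mulVec g = (∑ i, g i * g i) • g := by
  funext i
  simp only [Matrix.mulVec, dotProduct, Matrix.vecMulVec_apply, Pi.smul_apply,
    smul_eq_mul]
  rw [Finset.sum_mul]
  exact Finset.sum_congr rfl fun j _ => by ring

end FieldRedef

open FieldRedef Polynomial

/-- Formal-power-series field redefinition absorbing a perturbation quadratic in
the field equations: for polynomial `S` and symmetric `F` there is a formal
power series of symmetric matrices `Δ(ε) = F + O(ε)` such that the redefinition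
`x' = x + ε Δ(x,ε) ∇S(x)` satisfies `S'(x) = S(x')` to every order in `ε`;
in particular, to first order the choice `Δ = F` works:
`S(x + εF∇S(x)) = S(x) + ε⟨∇S, F∇S⟩ + O(ε²)`. -/
theorem stmt3 (n : ℕ) (S : (Fin n → ℝ) → ℝ)
    (hpoly : ∃ P : MvPolynomial (Fin n) ℝ, ∀ x, S x = MvPolynomial.eval x P)
    (F : Matrix (Fin n) (Fin n) ℝ) (hF : F.IsSymm)
    (gradS : (Fin n → ℝ) → (Fin n → ℝ))
    (hgrad : ∀ x i, gradS x i = fderiv ℝ S x (Pi.single i 1))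
    (S' : ℝ → (Fin n → ℝ) → ℝ)
    (hS' : ∀ ε x, S' ε x = S x + ε * ∑ i, gradS x i * F.mulVec (gradS x) i) :
    (∃ Δ : ℕ → (Fin n → ℝ) → Matrix (Fin n) (Fin n) ℝ,
      (∀ j x, (Δ j x).IsSymm) ∧ (∀ x, Δ 0 x = F) ∧
      ∀ (K : ℕ) (x : Fin n → ℝ),
        (fun ε : ℝ => S' ε x -
            S (x + ε • (∑ j ∈ Finset.range (K + 1), ε ^ j • (Δ j x).mulVec (gradS x))))
          =O[nhds 0] fun ε : ℝ => ε ^ (K + 2)) ∧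
    (∀ x : Fin n → ℝ,
      (fun ε : ℝ => S' ε x - S (x + ε • F.mulVec (gradS x)))
        =O[nhds 0] fun ε : ℝ => ε ^ 2) := by
  obtain ⟨P, hP⟩ := hpoly
  classical
  let Δf : ℕ → (Fin n → ℝ) → Matrix (Fin n) (Fin n) ℝ := fun m z =>
    match m with
    | 0 => F
    | (k+1) =>
        (((T P F z (gradS z)
            - MvPolynomial.aeval (Y z (vc P F z (gradS z) (k+1)) (k+1)) P).coeff (k+2))
          / (∑ i, gradS z i * gradS z i) / (∑ i, gradS z i * gradS z i)) •
          Matrix.vecMulVec (gradS z) (gradS z)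
  have hΔ0 : ∀ z, Δf 0 z = F := fun _ => rfl
  have hmain : ∀ (K : ℕ) (x : Fin n → ℝ),
      (fun ε : ℝ => S' ε x -
          S (x + ε • (∑ j ∈ Finset.range (K + 1), ε ^ j • (Δf j x).mulVec (gradS x))))
        =O[nhds 0] fun ε : ℝ => ε ^ (K + 2) := by
    intro K x
    by_cases hg : gradS x = 0
    · have hfun : (fun ε : ℝ => S' ε x -
          S (x + ε • (∑ j ∈ Finset.range (K + 1), ε ^ j • (Δf j x).mulVec (gradS x))))
          = fun _ : ℝ => (0:ℝ) := by
        funext ε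
        rw [hS', hg]
        simp [Matrix.mulVec_zero]
      rw [hfun]
      exact isBigO_zero _ _
    · set g := gradS x with hgdef
      have hQ : (∑ i, g i * g i) ≠ 0 := by
        intro h
        apply hg
        funext i
        have := (Finset.sum_eq_zero_iff_of_nonneg
          (fun i _ => mul_self_nonneg (g i))).mp h i (Finset.mem_univ i)
        have := mul_self_eq_zero.mp this
        simpa [hgdef] using this
      have hLf : ∀ w : Fin n → ℝ, Lf x w P = ∑ i, w i * g i := by
        intro w
        rw [Lf_eq_grad P S hP x w]
        exact Finset.sum_congr rfl fun i _ => by rw [hgdef, hgrad]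
      have hdvd := main_dvd P F x g hQ hLf K
      have hvj : ∀ j, (Δf j x).mulVec g = v P F x g j := by
        intro j
        cases j with
        | zero => rfl
        | succ k =>
          show ((((T P F x g
              - MvPolynomial.aeval (Y x (vc P F x g (k+1)) (k+1)) P).coeff (k+2))
            / (∑ i, g i * g i) / (∑ i, g i * g i)) •
              Matrix.vecMulVec g g).mulVec g = _
          rw [Matrix.smul_mulVec, vecMulVec_mulVec, smul_smul, div_mul_cancel₀ _ hQ]
          rfl
      have hfun : (fun ε : ℝ => S' ε x -
          S (x + ε • (∑ j ∈ Finset.range (K + 1), ε ^ j • (Δf j x).mulVec (gradS x))))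
          = fun ε : ℝ =>
            -((MvPolynomial.aeval (Y x (v P F x g) (K+1)) P - T P F x g).eval ε) := by
        funext ε
        have e1 : S' ε x = (T P F x g).eval ε := by
          rw [hS', T, hP x]
          simp only [eval_add, eval_C, eval_mul, eval_X]
          ring
        have e2 : S (x + ε • (∑ j ∈ Finset.range (K + 1), ε ^ j • (Δf j x).mulVec (gradS x)))
            = (MvPolynomial.aeval (Y x (v P F x g) (K+1)) P).eval ε := by
          rw [eval_aeval, hP]
          refine congrArg (fun z => MvPolynomial.eval z P) ?_
          funext i
          rw [Y_eval]
          simp only [Pi.add_apply, Pi.smul_apply, Finset.sum_apply, smul_eq_mul, ← hgdef, hvj]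
          rw [Finset.mul_sum]
          exact congrArg (x i + ·) (Finset.sum_congr rfl fun j _ => by ring)
        rw [e1, e2, eval_sub]
        ring
      rw [hfun]
      exact (dvd_isBigO hdvd).neg_left
  refine ⟨⟨Δf, ?_, hΔ0, hmain⟩, fun x => ?_⟩
  · intro j z
    cases j with
    | zero => exact hF
    | succ k =>
      show Matrix.transpose (_ • Matrix.vecMulVec (gradS z) (gradS z)) = _
      rw [Matrix.transpose_smul]
      congr 1
      apply Matrix.ext
      intro a b
      simp [Matrix.transpose_apply, Matrix.vecMulVec_apply, mul_comm]
  · have h := hmain 0 x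
    simp only [zero_add, Finset.sum_range_one, pow_zero, one_smul, hΔ0] at h
    exact h
end

section
/- Define Δ : ℝ → Sym(n,ℝ) as a formal power series in ε by the recursion Δ = F - Δ · H(Δ) · Δ truncated appropriately, where H(Δ)ₖ₁ₖ₂ = Σ_{m≥2} (1/m!) S_{k₁k₂k₃⋯kₘ} ∏_{l=3}^{m} (Δ S)_{kₗ} with S a polynomial in n variables and all multi-derivatives S_{k₁⋯kₘ} constant beyond the degree of S. Then this recursion has a unique solution as a formal power series in the entries of F, and its expansion begins Δᵢⱼ = Fᵢⱼ - (1/2) Fᵢₖ S_{kl} F_{lj} + higher order terms in F. -/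
/-!
Writing `Φ(Δ) = F − Δ H(Δ) Δ`, the map `Φ` is an `X`-adic contraction on matrices of power series
without constant term: if `Δ ≡ Δ' mod X^N` then `Φ Δ ≡ Φ Δ' mod X^(N+1)`, because `Δ` enters
quadratically and `H` only through the entries of `Δ S`. Iterating `Φ` from `0` converges
coefficientwise to the unique fixed point. Symmetry of the fixed point `Δ` comes from symmetry of
`H(Δ)` (mixed partials commute) and uniqueness of the fixed point of `D ↦ F − D H(Δ) D`, which
`Δ` and `Δᵀ` both solve. Reading off coefficients, `Δ = X F − X² F H₀ F + O(X³)` with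
`H₀ = ½ S''` the constant term of `H(Δ)`.
-/

open PowerSeries Matrix

namespace PowerSeries

variable {R : Type*} [CommRing R]

theorem eq_of_forall_X_pow_dvd_sub {f g : R⟦X⟧} (h : ∀ N, X ^ N ∣ f - g) : f = g := by
  ext N
  simpa [sub_eq_zero] using X_pow_dvd_iff.mp (h (N + 1)) N (Nat.lt_succ_self N)

theorem X_pow_dvd_sub_of_le {f : ℕ → R⟦X⟧} (hf : ∀ k, X ^ k ∣ f k - f (k + 1)) {a b : ℕ}
    (hab : a ≤ b) : X ^ a ∣ f a - f b := by
  induction b, hab using Nat.le_induction with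
  | base => simp
  | succ b hab ih =>
    simpa only [sub_add_sub_cancel] using dvd_add ih ((pow_dvd_pow X hab).trans (hf b))

theorem exists_forall_X_pow_dvd_sub {f : ℕ → R⟦X⟧} (hf : ∀ k, X ^ k ∣ f k - f (k + 1)) :
    ∃ L, ∀ k, X ^ k ∣ L - f k := by
  refine ⟨mk fun k => coeff k (f (k + 1)), fun k => X_pow_dvd_iff.mpr fun j hj => ?_⟩
  have := X_pow_dvd_iff.mp (X_pow_dvd_sub_of_le hf (Nat.succ_le_of_lt hj)) j (Nat.lt_succ_self j)
  simpa [sub_eq_zero] using this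

end PowerSeries

theorem Matrix.dvd_mul_apply {R l m n : Type*} [CommSemiring R] [Fintype m] {a b : R}
    {A : Matrix l m R} {B : Matrix m n R} (hA : ∀ i j, a ∣ A i j) (hB : ∀ i j, b ∣ B i j)
    (i : l) (j : n) : a * b ∣ (A * B) i j :=
  Finset.dvd_sum fun k _ => mul_dvd_mul (hA i k) (hB k j)

section XAdic

variable {R : Type*} [CommRing R] {m n : Type*}

def IsXAdicContraction (Φ : Matrix m n R⟦X⟧ → Matrix m n R⟦X⟧) : Prop :=
  ∀ N Δ Δ', (∀ i j, X ∣ Δ i j) → (∀ i j, X ∣ Δ' i j) →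
    (∀ i j, X ^ N ∣ Δ i j - Δ' i j) → ∀ i j, X ^ (N + 1) ∣ Φ Δ i j - Φ Δ' i j

def IsXAdicNonexpanding (H : Matrix m n R⟦X⟧ → Matrix m n R⟦X⟧) : Prop :=
  ∀ N Δ Δ', (∀ i j, X ^ N ∣ Δ i j - Δ' i j) → ∀ i j, X ^ N ∣ H Δ i j - H Δ' i j

namespace IsXAdicContraction

variable {Φ : Matrix m n R⟦X⟧ → Matrix m n R⟦X⟧}

theorem X_dvd_apply (hΦ : IsXAdicContraction Φ) (h0 : ∀ i j, X ∣ Φ 0 i j)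
    {Δ : Matrix m n R⟦X⟧} (hΔ : ∀ i j, X ∣ Δ i j) (i : m) (j : n) : X ∣ Φ Δ i j := by
  have := hΦ 0 Δ 0 hΔ (by simp) (by simp) i j
  rw [zero_add, pow_one] at this
  simpa using dvd_add this (h0 i j)

theorem eq_of_isFixedPt (hΦ : IsXAdicContraction Φ) {Δ Δ' : Matrix m n R⟦X⟧}
    (hΔ : ∀ i j, X ∣ Δ i j) (hΔ' : ∀ i j, X ∣ Δ' i j)
    (h : Function.IsFixedPt Φ Δ) (h' : Function.IsFixedPt Φ Δ') : Δ = Δ' := by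
  have hdvd : ∀ N i j, X ^ N ∣ Δ i j - Δ' i j := by
    intro N
    induction N with
    | zero => simp
    | succ N ih => simpa only [h.eq, h'.eq] using hΦ N Δ Δ' hΔ hΔ' ih
  exact Matrix.ext fun i j => eq_of_forall_X_pow_dvd_sub fun N => hdvd N i j

theorem existsUnique_isFixedPt (hΦ : IsXAdicContraction Φ) (h0 : ∀ i j, X ∣ Φ 0 i j) :
    ∃! Δ, (∀ i j, X ∣ Δ i j) ∧ Function.IsFixedPt Φ Δ := by
  have hiter0 : ∀ k i j, X ∣ Φ^[k] 0 i j := by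
    intro k
    induction k with
    | zero => simp
    | succ k ih =>
      rw [Function.iterate_succ_apply']
      exact hΦ.X_dvd_apply h0 ih
  have hcauchy : ∀ k i j, X ^ k ∣ Φ^[k] 0 i j - Φ^[k + 1] 0 i j := by
    intro k
    induction k with
    | zero => simp
    | succ k ih =>
      rw [Function.iterate_succ_apply', Function.iterate_succ_apply']
      exact hΦ k _ _ (hiter0 k) (hiter0 (k + 1)) (by simpa [Function.iterate_succ_apply'] using ih)
  choose L hL using fun i j =>
    exists_forall_X_pow_dvd_sub (f := fun k => Φ^[k] 0 i j) (hcauchy · i j)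
  have hL0 : ∀ i j, X ∣ of L i j := fun i j => by
    have := hL i j 1
    rw [pow_one] at this
    simpa using dvd_add this (hiter0 1 i j)
  have hfix : Function.IsFixedPt Φ (of L) := by
    refine Matrix.ext fun i j => eq_of_forall_X_pow_dvd_sub fun N => (pow_dvd_pow X N.le_succ).trans ?_
    have h1 := hΦ N (of L) (Φ^[N] 0) hL0 (hiter0 N) (fun i j => hL i j N) i j
    rw [← Function.iterate_succ_apply' Φ] at h1
    simpa using dvd_sub h1 (hL i j (N + 1))
  exact ⟨of L, ⟨hL0, hfix⟩, fun Δ ⟨hΔ, h⟩ => hΦ.eq_of_isFixedPt hΔ hL0 h hfix⟩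

end IsXAdicContraction

end XAdic

section QuadraticRecursion

variable {R : Type*} [CommRing R] {n : Type*} [Fintype n]

theorem isXAdicContraction_sub_mul_mul (F : Matrix n n R⟦X⟧)
    {H : Matrix n n R⟦X⟧ → Matrix n n R⟦X⟧} (hH : IsXAdicNonexpanding H) :
    IsXAdicContraction fun Δ => F - Δ * H Δ * Δ := by
  intro N Δ Δ' hΔ hΔ' h i j
  have hsplit : (F - Δ * H Δ * Δ) - (F - Δ' * H Δ' * Δ') =
      -((Δ - Δ') * H Δ * Δ + Δ' * (H Δ - H Δ') * Δ + Δ' * H Δ' * (Δ - Δ')) := by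
    noncomm_ring
  have hone : ∀ (A : Matrix n n R⟦X⟧) i j, 1 ∣ A i j := fun _ _ _ => one_dvd _
  rw [← Matrix.sub_apply, hsplit, neg_apply, dvd_neg, Matrix.add_apply, Matrix.add_apply]
  refine dvd_add (dvd_add ?_ ?_) ?_
  · simpa [pow_succ] using dvd_mul_apply (dvd_mul_apply (A := Δ - Δ') h (hone _)) hΔ i j
  · refine (Dvd.intro X ?_).trans
      (dvd_mul_apply (dvd_mul_apply hΔ' (B := H Δ - H Δ') (hH N Δ Δ' h)) hΔ i j)
    ring
  · simpa [pow_succ'] using dvd_mul_apply (dvd_mul_apply hΔ' (hone _)) (B := Δ - Δ') h i j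

theorem isSymm_of_eq_sub_mul_mul {F H Δ : Matrix n n R⟦X⟧} (hF : F.IsSymm) (hH : H.IsSymm)
    (hΔ0 : ∀ i j, X ∣ Δ i j) (hΔ : Δ = F - Δ * H * Δ) : Δ.IsSymm := by
  have hΔt : Δᵀ = F - Δᵀ * H * Δᵀ := by
    conv_lhs => rw [hΔ]
    rw [transpose_sub, transpose_mul, transpose_mul, hF.eq, hH.eq, Matrix.mul_assoc]
  exact (isXAdicContraction_sub_mul_mul F (H := fun _ => H) fun _ _ _ _ _ _ => by simp)
    |>.eq_of_isFixedPt (fun i j => hΔ0 j i) hΔ0 hΔt.symm hΔ.symm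

theorem existsUnique_isSymm_eq_sub_mul_mul {F : Matrix n n R⟦X⟧}
    {H : Matrix n n R⟦X⟧ → Matrix n n R⟦X⟧} (hF0 : ∀ i j, constantCoeff (F i j) = 0)
    (hF : F.IsSymm) (hHsymm : ∀ Δ, (H Δ).IsSymm) (hH : IsXAdicNonexpanding H) :
    ∃! Δ, Δ.IsSymm ∧ (∀ i j, constantCoeff (Δ i j) = 0) ∧ Δ = F - Δ * H Δ * Δ := by
  simp only [← X_dvd_iff] at hF0 ⊢
  obtain ⟨L, ⟨hL0, hL⟩, huniq⟩ :=
    (isXAdicContraction_sub_mul_mul F hH).existsUnique_isFixedPt (by simpa using hF0)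
  exact ⟨L, ⟨isSymm_of_eq_sub_mul_mul hF (hHsymm L) hL0 hL.symm, hL0, hL.symm⟩,
    fun Δ ⟨_, hΔ0, hΔ⟩ => huniq Δ ⟨hΔ0, hΔ.symm⟩⟩

theorem coeff_of_eq_sub_mul_mul {F : Matrix n n R} {H Δ : Matrix n n R⟦X⟧}
    (hΔ0 : ∀ i j, constantCoeff (Δ i j) = 0)
    (hΔ : Δ = (X : R⟦X⟧) • (F.map C : Matrix n n R⟦X⟧) - Δ * H * Δ) :
    (∀ i j, coeff 1 (Δ i j) = F i j) ∧
      ∀ i j, coeff 2 (Δ i j) = -(F * H.map constantCoeff * F) i j := by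
  choose A hA using fun i j => (X_dvd_iff (φ := Δ i j)).mpr (hΔ0 i j)
  have hprod : Δ * H * Δ = (X : R⟦X⟧) ^ 2 • (of A * H * of A) := by
    have hΔA : Δ = (X : R⟦X⟧) • of A :=
      Matrix.ext fun i j => by rw [hA, Matrix.smul_apply, of_apply, smul_eq_mul]
    rw [hΔA]
    simp only [smul_mul_assoc, mul_smul_comm, smul_smul, sq]
  have hc1 : ∀ i j, coeff 1 (Δ i j) = F i j := fun i j => by
    rw [hΔ, Matrix.sub_apply, hprod]
    simp [sq, mul_assoc, coeff_succ_X_mul]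
  have hA1 : (of A).map constantCoeff = F := Matrix.ext fun i j => by
    rw [← hc1, hA]
    simp [coeff_succ_X_mul]
  have hAHA : ∀ i j,
      constantCoeff ((of A * H * of A) i j) = (F * H.map constantCoeff * F) i j := fun i j => by
    rw [← hA1, ← Matrix.map_mul, ← Matrix.map_mul, map_apply]
  refine ⟨hc1, fun i j => ?_⟩
  rw [hΔ, Matrix.sub_apply, hprod, ← hAHA]
  simp [sq, mul_assoc, coeff_succ_X_mul, coeff_X]

end QuadraticRecursion

section HessianSeries

variable {𝕜 ι : Type*} [Field 𝕜] [Fintype ι]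

/-- The paper's `H(Δ)`, with `D m idx = S_{idx 0 ⋯ idx (m-1)}` (entries of `idx` past `m - 1` are
padding) and `v k = S_k`. -/
noncomputable def hessianSeries (d : ℕ) (D : ℕ → (ℕ → ι) → 𝕜) (v : ι → 𝕜⟦X⟧)
    (Δ : Matrix ι ι 𝕜⟦X⟧) : Matrix ι ι 𝕜⟦X⟧ :=
  of fun k₁ k₂ => ∑ m ∈ Finset.Icc 2 d, C (m.factorial : 𝕜)⁻¹ *
    ∑ ks : Fin (m - 2) → ι,
      C (D m fun t => if t = 0 then k₁ else if t = 1 then k₂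
        else if h : t - 2 < m - 2 then ks ⟨t - 2, h⟩ else k₁) *
      ∏ l : Fin (m - 2), (Δ *ᵥ v) (ks l)

variable (d : ℕ) (D : ℕ → (ℕ → ι) → 𝕜) (v : ι → 𝕜⟦X⟧)

theorem isXAdicNonexpanding_hessianSeries : IsXAdicNonexpanding (hessianSeries d D v) := by
  intro N Δ Δ' h k₁ k₂
  set π := Ideal.Quotient.mk (Ideal.span {(X : 𝕜⟦X⟧) ^ N})
  have hπ : ∀ a b, X ^ N ∣ a - b ↔ π a = π b := fun a b => by
    rw [Ideal.Quotient.eq, Ideal.mem_span_singleton]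
  have hΔ : Δ.map π = Δ'.map π := Matrix.ext fun i j => (hπ _ _).1 (h i j)
  rw [hπ]
  simp only [hessianSeries, of_apply, map_sum, map_mul, map_prod, RingHom.map_mulVec, hΔ]

variable {D}

theorem hessianSeries_isSymm
    (hloc : ∀ m idx idx', (∀ t < m, idx t = idx' t) → D m idx = D m idx')
    (hswap : ∀ m ≥ 2, ∀ idx, D m (idx ∘ Equiv.swap 0 1) = D m idx) (Δ : Matrix ι ι 𝕜⟦X⟧) :
    (hessianSeries d D v Δ).IsSymm := by
  refine Matrix.ext fun k₁ k₂ => ?_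
  simp only [transpose_apply, hessianSeries, of_apply]
  refine Finset.sum_congr rfl fun m hm => ?_
  congr 1
  refine Finset.sum_congr rfl fun ks _ => ?_
  congr 2
  rw [← hswap m (Finset.mem_Icc.mp hm).1]
  refine hloc m _ _ fun t ht => ?_
  rcases t with _ | _ | t
  · simp
  · simp
  · simp [Equiv.swap_apply_of_ne_of_ne, show t < m - 2 by omega]

theorem constantCoeff_hessianSeries
    (hloc : ∀ m idx idx', (∀ t < m, idx t = idx' t) → D m idx = D m idx')
    (hvanish : ∀ m > d, ∀ idx, D m idx = 0) {Δ : Matrix ι ι 𝕜⟦X⟧}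
    (hΔ : ∀ i j, constantCoeff (Δ i j) = 0) (k₁ k₂ : ι) :
    constantCoeff (hessianSeries d D v Δ k₁ k₂) =
      2⁻¹ * D 2 (fun t => if t = 0 then k₁ else k₂) := by
  have hΔ0 : Δ.map constantCoeff = 0 := Matrix.ext hΔ
  simp only [hessianSeries, of_apply, map_sum, map_mul, map_prod, RingHom.map_mulVec, hΔ0,
    zero_mulVec, constantCoeff_C, Pi.zero_apply, Finset.prod_const, Finset.card_univ,
    Fintype.card_fin]
  rcases lt_or_ge d 2 with hd | hd
  · rw [Finset.Icc_eq_empty_of_lt hd, hvanish 2 hd]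
    simp
  rw [Finset.sum_eq_single_of_mem 2 (Finset.mem_Icc.mpr ⟨le_rfl, hd⟩)]
  · have h2 : (D 2 fun t => if t = 0 then k₁ else if t = 1 then k₂ else k₁) =
        D 2 fun t => if t = 0 then k₁ else k₂ :=
      hloc 2 _ _ fun t ht => by interval_cases t <;> rfl
    simp [Nat.factorial, h2]
  · intro m hm hm2
    have : m - 2 ≠ 0 := by have := (Finset.mem_Icc.mp hm).1; omega
    simp [this]

end HessianSeries

theorem AnalyticOn.iteratedFDeriv_comp_swap_zero_one {𝕜 E F : Type*}
    [NontriviallyNormedField 𝕜] [NormedAddCommGroup E] [NormedSpace 𝕜 E]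
    [NormedAddCommGroup F] [NormedSpace 𝕜 F] {f : E → F} (hf : AnalyticOn 𝕜 f Set.univ)
    (x : E) {m : ℕ} (hm : 2 ≤ m) (v : ℕ → E) :
    iteratedFDeriv 𝕜 m f x (fun l : Fin m => v (Equiv.swap 0 1 l)) =
      iteratedFDeriv 𝕜 m f x (fun l : Fin m => v l) := by
  obtain ⟨k, rfl⟩ := Nat.exists_eq_add_of_le' hm
  conv_rhs => rw [← hf.iteratedFDeriv_comp_perm _ (Equiv.swap 0 1)]
  congr 1
  funext l
  rcases l with ⟨_ | _ | l, hl⟩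
  · rfl
  · rfl
  · have h0 : (⟨l + 2, hl⟩ : Fin (k + 2)) ≠ 0 := Fin.ne_of_val_ne (by simp)
    have h1 : (⟨l + 2, hl⟩ : Fin (k + 2)) ≠ 1 := Fin.ne_of_val_ne (by simp)
    simp only [Function.comp_apply, Equiv.swap_apply_of_ne_of_ne h0 h1]
    rw [Equiv.swap_apply_of_ne_of_ne (by omega) (by omega)]

theorem stmt5_general (n d : ℕ) (S : (Fin n → ℝ) → ℝ) (x : Fin n → ℝ)
    (hpoly : ∃ P : MvPolynomial (Fin n) ℝ, ∀ y, S y = MvPolynomial.eval y P)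
    (Dtens : (m : ℕ) → (ℕ → Fin n) → ℝ)
    (hD : ∀ (m : ℕ) (idx : ℕ → Fin n),
      Dtens m idx = iteratedFDeriv ℝ m S x (fun l : Fin m => Pi.single (idx (l : ℕ)) 1))
    (hvanish : ∀ m > d, ∀ idx, Dtens m idx = 0)
    (F : Matrix (Fin n) (Fin n) ℝ) (hF : F.IsSymm)
    (Sv : Fin n → PowerSeries ℝ)
    (Hmat : Matrix (Fin n) (Fin n) (PowerSeries ℝ) → Matrix (Fin n) (Fin n) (PowerSeries ℝ))
    (hH : ∀ Δ k₁ k₂, Hmat Δ k₁ k₂ =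
      ∑ m ∈ Finset.Icc 2 d, (PowerSeries.C ((m.factorial : ℝ))⁻¹) *
        ∑ ks : Fin (m - 2) → Fin n,
          (PowerSeries.C (Dtens m (fun t =>
            if t = 0 then k₁ else if t = 1 then k₂
            else if h : t - 2 < m - 2 then ks ⟨t - 2, h⟩ else k₁))) *
          ∏ l : Fin (m - 2), (Δ.mulVec Sv) (ks l))
    (Fps : Matrix (Fin n) (Fin n) (PowerSeries ℝ))
    (hFps : ∀ i j, Fps i j = PowerSeries.X * PowerSeries.C (F i j)) :
    (∃! Δ : Matrix (Fin n) (Fin n) (PowerSeries ℝ),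
      Δ.IsSymm ∧ (∀ i j, PowerSeries.constantCoeff (Δ i j) = 0) ∧
      Δ = Fps - Δ * Hmat Δ * Δ) ∧
    (∀ Δ : Matrix (Fin n) (Fin n) (PowerSeries ℝ),
      Δ.IsSymm → (∀ i j, PowerSeries.constantCoeff (Δ i j) = 0) →
      Δ = Fps - Δ * Hmat Δ * Δ →
      (∀ i j, PowerSeries.coeff 1 (Δ i j) = F i j) ∧
      (∀ i j, PowerSeries.coeff 2 (Δ i j) =
        -(1 / 2) * ∑ k, ∑ l, F i k *
          Dtens 2 (fun t => if t = 0 then k else l) * F l j)) := by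
  obtain ⟨P, hP⟩ := hpoly
  have hS : AnalyticOn ℝ S Set.univ := by
    rw [show S = fun y => MvPolynomial.eval y P from funext hP]
    exact (AnalyticOnNhd.eval_mvPolynomial P).analyticOn
  have hloc : ∀ m idx idx', (∀ t < m, idx t = idx' t) → Dtens m idx = Dtens m idx' :=
    fun m idx idx' h => by simp only [hD, h _ (Fin.is_lt _)]
  have hswap : ∀ m ≥ 2, ∀ idx, Dtens m (idx ∘ Equiv.swap 0 1) = Dtens m idx := fun m hm idx => by
    rw [hD, hD]
    exact hS.iteratedFDeriv_comp_swap_zero_one x hm fun t => Pi.single (idx t) 1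
  obtain rfl : Hmat = hessianSeries d Dtens Sv := funext fun Δ => Matrix.ext (hH Δ)
  obtain rfl : Fps = (X : PowerSeries ℝ) • F.map C := Matrix.ext fun i j => hFps i j
  refine ⟨existsUnique_isSymm_eq_sub_mul_mul (by simp) ((hF.map C).smul X)
    (hessianSeries_isSymm d Sv hloc hswap) (isXAdicNonexpanding_hessianSeries d Dtens Sv),
    fun Δ _ hΔ0 hΔ => ?_⟩
  obtain ⟨h1, h2⟩ := coeff_of_eq_sub_mul_mul hΔ0 hΔ
  refine ⟨h1, fun i j => ?_⟩
  rw [h2]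
  simp only [Matrix.mul_apply, map_apply, constantCoeff_hessianSeries d Sv hloc hvanish hΔ0,
    Finset.sum_mul, Finset.mul_sum]
  rw [Finset.sum_comm, ← Finset.sum_neg_distrib]
  refine Finset.sum_congr rfl fun k _ => ?_
  rw [← Finset.sum_neg_distrib]
  exact Finset.sum_congr rfl fun l _ => by ring

/-- The recursion `Δ = F − Δ·H(Δ)·Δ`, where
`H(Δ)_{k₁k₂} = Σ_{m≥2} (1/m!) S_{k₁k₂k₃⋯kₘ} ∏_{l=3}^m (ΔS)_{kₗ}` with `S` a
polynomial (so that all derivatives beyond its degree `d` vanish), has a unique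
solution as a formal power series (in the grading by powers of the entries of
`F`, marked by the power-series variable), with symmetric `Δ` of zero constant
term, and the expansion begins `Δᵢⱼ = Fᵢⱼ − ½ Fᵢₖ S_{kl} F_{lj} + ⋯`. -/
theorem stmt5 (n d : ℕ) (S : (Fin n → ℝ) → ℝ) (x : Fin n → ℝ)
    (hpoly : ∃ P : MvPolynomial (Fin n) ℝ, ∀ y, S y = MvPolynomial.eval y P)
    (Dtens : (m : ℕ) → (ℕ → Fin n) → ℝ)
    (hD : ∀ (m : ℕ) (idx : ℕ → Fin n),
      Dtens m idx = iteratedFDeriv ℝ m S x (fun l : Fin m => Pi.single (idx (l : ℕ)) 1))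
    (hvanish : ∀ m > d, ∀ idx, Dtens m idx = 0)
    (F : Matrix (Fin n) (Fin n) ℝ) (hF : F.IsSymm)
    (Sv : Fin n → PowerSeries ℝ)
    (hSv : ∀ i, Sv i = PowerSeries.C (Dtens 1 (fun _ => i)))
    (Hmat : Matrix (Fin n) (Fin n) (PowerSeries ℝ) → Matrix (Fin n) (Fin n) (PowerSeries ℝ))
    (hH : ∀ Δ k₁ k₂, Hmat Δ k₁ k₂ =
      ∑ m ∈ Finset.Icc 2 d, (PowerSeries.C ((m.factorial : ℝ))⁻¹) *
        ∑ ks : Fin (m - 2) → Fin n,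
          (PowerSeries.C (Dtens m (fun t =>
            if t = 0 then k₁ else if t = 1 then k₂
            else if h : t - 2 < m - 2 then ks ⟨t - 2, h⟩ else k₁))) *
          ∏ l : Fin (m - 2), (Δ.mulVec Sv) (ks l))
    (Fps : Matrix (Fin n) (Fin n) (PowerSeries ℝ))
    (hFps : ∀ i j, Fps i j = PowerSeries.X * PowerSeries.C (F i j)) :
    (∃! Δ : Matrix (Fin n) (Fin n) (PowerSeries ℝ),
      Δ.IsSymm ∧ (∀ i j, PowerSeries.constantCoeff (Δ i j) = 0) ∧
      Δ = Fps - Δ * Hmat Δ * Δ) ∧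
    (∀ Δ : Matrix (Fin n) (Fin n) (PowerSeries ℝ),
      Δ.IsSymm → (∀ i j, PowerSeries.constantCoeff (Δ i j) = 0) →
      Δ = Fps - Δ * Hmat Δ * Δ →
      (∀ i j, PowerSeries.coeff 1 (Δ i j) = F i j) ∧
      (∀ i j, PowerSeries.coeff 2 (Δ i j) =
        -(1 / 2) * ∑ k, ∑ l, F i k *
          Dtens 2 (fun t => if t = 0 then k else l) * F l j)) :=
  stmt5_general n d S x hpoly Dtens hD hvanish F hF Sv Hmat hH Fps hFps
end

section
/- Let S(φ) = ½φᵀKφ with K ∈ Sym⁺(n), and perturb: S'(φ) = S(φ) + ∇S(φ)ᵀ F ∇S(φ) with F symmetric and ‖F‖·‖K‖ < 1/4. Then there exists a symmetric matrix Δ with S'(φ) = S(φ + Δ∇S(φ)) for all φ, given explicitly by any symmetric solution of Δ + ½ΔKΔ = F; concretely, Δ = K⁻¹((I + 2KF)^{1/2} − I) when K and F commute, and such Δ exists whenever I + 2KF (as a K-symmetric operator) is positive. -/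
section Stmt19Aux
open Matrix Polynomial
variable {n : ℕ}
local notation "Mn" => Matrix (Fin n) (Fin n) ℝ

lemma eig_bound (A : Mn) (t : ℝ) (v : Fin n → ℝ) (hv : v ≠ 0)
    (h : A *ᵥ v = t • v) :
    |t| ≤ ‖LinearMap.toContinuousLinearMap (Matrix.toLin' A)‖ := by
  have h1 := (LinearMap.toContinuousLinearMap (Matrix.toLin' A)).le_opNorm v
  rw [LinearMap.coe_toContinuousLinearMap', Matrix.toLin'_apply, h, norm_smul] at h1
  have hv' : 0 < ‖v‖ := norm_pos_iff.mpr hv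
  have : ‖t‖ * ‖v‖ ≤ ‖LinearMap.toContinuousLinearMap (Matrix.toLin' A)‖ * ‖v‖ := h1
  have := le_of_mul_le_mul_right this hv'
  simpa using this

lemma opnorm_mul_le (A B : Mn) :
    ‖LinearMap.toContinuousLinearMap (Matrix.toLin' (A * B))‖ ≤
      ‖LinearMap.toContinuousLinearMap (Matrix.toLin' A)‖ *
      ‖LinearMap.toContinuousLinearMap (Matrix.toLin' B)‖ := by
  have : LinearMap.toContinuousLinearMap (Matrix.toLin' (A * B)) =
      (LinearMap.toContinuousLinearMap (Matrix.toLin' A)).comp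
      (LinearMap.toContinuousLinearMap (Matrix.toLin' B)) := by
    ext v
    simp [Matrix.toLin'_mul]
  rw [this]
  exact ContinuousLinearMap.opNorm_comp_le _ _

lemma conj_aeval (u : (Mn)ˣ) (a : Mn) (p : ℝ[X]) :
    aeval ((u : Mn) * a * (↑u⁻¹ : Mn)) p = (u : Mn) * aeval a p * (↑u⁻¹ : Mn) := by
  induction p using Polynomial.induction_on' with
  | add p q hp hq => simp only [map_add, hp, hq, mul_add, add_mul]
  | monomial k c =>
    rw [aeval_monomial, aeval_monomial, Units.conj_pow]
    rw [← mul_assoc, ← mul_assoc, Algebra.commutes c (u : Mn)]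
    simp [mul_assoc]

lemma commute_aeval {C a : Mn} (h : Commute C a) (p : ℝ[X]) :
    Commute C (aeval a p) := by
  induction p using Polynomial.induction_on' with
  | add p q hp hq => simpa [map_add] using hp.add_right hq
  | monomial k c =>
    rw [aeval_monomial]
    exact Commute.mul_right ((Algebra.commutes c C).symm) (h.pow_right k)

lemma aeval_diagonal (d : Fin n → ℝ) (p : ℝ[X]) :
    aeval (Matrix.diagonal d) p = Matrix.diagonal (fun i => p.eval (d i)) := by
  have h1 := Polynomial.aeval_algHom_apply
    (Matrix.diagonalAlgHom (n := Fin n) (α := ℝ) ℝ) d p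
  have h2 : (aeval d p : Fin n → ℝ) = fun i => p.eval (d i) := by
    funext i
    have h3 := Polynomial.aeval_algHom_apply (Pi.evalAlgHom ℝ (fun _ : Fin n => ℝ) i) d p
    simpa using h3
  have h4 : (Matrix.diagonalAlgHom (n := Fin n) (α := ℝ) ℝ) d = Matrix.diagonal d := rfl
  rw [h4] at h1
  rw [h1, h2]
  rfl

noncomputable def Matrix.PosSemidef.sqrt {A : Mn} (hA : A.PosSemidef) : Mn :=
  (hA.1.eigenvectorUnitary : Mn) *
    Matrix.diagonal ((RCLike.ofReal ∘ Real.sqrt ∘ hA.1.eigenvalues : Fin n → ℝ)) *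
    star (hA.1.eigenvectorUnitary : Mn)

lemma Matrix.PosSemidef.posSemidef_sqrt {A : Mn} (hA : A.PosSemidef) : hA.sqrt.PosSemidef := by
  unfold Matrix.PosSemidef.sqrt
  rw [Matrix.star_eq_conjTranspose]
  apply Matrix.PosSemidef.mul_mul_conjTranspose_same
  refine Matrix.posSemidef_diagonal_iff.mpr fun i => ?_
  simp [Real.sqrt_nonneg]

lemma Matrix.PosSemidef.sqrt_mul_self {A : Mn} (hA : A.PosSemidef) : hA.sqrt * hA.sqrt = A := by
  unfold Matrix.PosSemidef.sqrt
  set C : Mn := (hA.1.eigenvectorUnitary : Mn) with hCdef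
  set D : Mn := Matrix.diagonal ((RCLike.ofReal ∘ Real.sqrt ∘ hA.1.eigenvalues : Fin n → ℝ))
    with hDdef
  have hC : star C * C = 1 := Unitary.star_mul_self_of_mem hA.1.eigenvectorUnitary.2
  have hd : D * D = Matrix.diagonal ((RCLike.ofReal ∘ hA.1.eigenvalues : Fin n → ℝ)) := by
    rw [hDdef, Matrix.diagonal_mul_diagonal]
    congr 1
    funext i
    simp [Real.mul_self_sqrt (hA.eigenvalues_nonneg i)]
  have hst := hA.1.spectral_theorem
  rw [Unitary.conjStarAlgAut_apply] at hst
  conv_rhs => rw [hst]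
  calc C * D * star C * (C * D * star C) = C * (D * (star C * C) * D) * star C := by
        simp only [Matrix.mul_assoc]
    _ = _ := by rw [hC, Matrix.mul_one, hd]

lemma sqrt_eq_aeval {A : Mn} (hA : A.PosSemidef) :
    ∃ p : ℝ[X], hA.sqrt = aeval A p := by
  classical
  set hH := hA.1 with hHdef
  set ev : Fin n → ℝ := hH.eigenvalues with hev
  set s : Finset ℝ := Finset.univ.image ev with hs
  set p : ℝ[X] := Lagrange.interpolate s id Real.sqrt with hp
  refine ⟨p, ?_⟩
  have hnode : ∀ i, p.eval (ev i) = Real.sqrt (ev i) := by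
    intro i
    have hmem : ev i ∈ s := Finset.mem_image_of_mem ev (Finset.mem_univ i)
    have := Lagrange.eval_interpolate_at_node (v := id) Real.sqrt (Set.injOn_id _) hmem
    simpa [hp] using this
  set u : (Mn)ˣ := Unitary.toUnits hH.eigenvectorUnitary with hu
  have hu1 : (u : Mn) = (hH.eigenvectorUnitary : Mn) := rfl
  have hu2 : ((↑u⁻¹ : Mn)) = star (hH.eigenvectorUnitary : Mn) := rfl
  have hAeq : A = (u : Mn) * Matrix.diagonal (RCLike.ofReal ∘ ev) * (↑u⁻¹ : Mn) := by
    rw [hu1, hu2]; have hst := hH.spectral_theorem; rwa [Unitary.conjStarAlgAut_apply] at hst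
  conv_rhs => rw [hAeq]
  rw [conj_aeval, aeval_diagonal]
  rw [Matrix.PosSemidef.sqrt, hu1, hu2]
  have hfun : (RCLike.ofReal ∘ Real.sqrt ∘ hH.eigenvalues : Fin n → ℝ) =
      (fun i => eval ((RCLike.ofReal ∘ ev) i) p) := by
    funext i
    simp [RCLike.ofReal_real_eq_id, hnode i]
    rfl
  rw [hfun]

lemma commute_sqrt {A C : Mn} (hA : A.PosSemidef) (h : Commute C A) :
    Commute C hA.sqrt := by
  obtain ⟨p, hp⟩ := sqrt_eq_aeval hA
  rw [hp]
  exact commute_aeval h p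

lemma half_one_posDef : ((1/2:ℝ) • (1 : Mn)).PosDef := by
  rw [Matrix.smul_one_eq_diagonal]
  exact Matrix.posDef_diagonal_iff.mpr (fun _ => by norm_num)

lemma posDef_one_add {H : Mn} (hHs : ((1/2:ℝ) • (1:Mn) + H).IsHermitian)
    (hb : ∀ (t : ℝ) (v : Fin n → ℝ), v ≠ 0 → H *ᵥ v = t • v → |t| < 1/2) :
    ((1 : Mn) + H).PosDef := by
  have hG : ((1/2:ℝ) • (1:Mn) + H).PosSemidef := by
    apply hHs.posSemidef_iff_eigenvalues_nonneg.mpr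
    intro i
    set b : Fin n → ℝ := ⇑(hHs.eigenvectorBasis i) with hbdef
    have hbe := hHs.mulVec_eigenvectorBasis i
    have hbne : b ≠ 0 := by
      intro h0
      exact hHs.eigenvectorBasis.orthonormal.ne_zero i
        (by ext j; exact congrFun h0 j)
    have hHv : H *ᵥ b = (hHs.eigenvalues i - 1/2) • b := by
      have h1 : ((1/2:ℝ) • (1:Mn) + H) *ᵥ b = (1/2:ℝ) • b + H *ᵥ b := by
        rw [Matrix.add_mulVec, Matrix.smul_mulVec, Matrix.one_mulVec]
      rw [h1] at hbe
      rw [sub_smul]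
      rw [eq_sub_iff_add_eq, add_comm]
      exact hbe
    have := hb _ _ hbne hHv
    have h2 := abs_lt.mp this
    rw [Pi.zero_apply]
    linarith [h2.1]
  have he : (1 : Mn) + H = (1/2:ℝ) • (1:Mn) + ((1/2:ℝ) • (1:Mn) + H) := by
    module
  rw [he]
  exact Matrix.PosDef.add_posSemidef half_one_posDef hG

lemma dp (A : Mn) (x y : Fin n → ℝ) : (A *ᵥ x) ⬝ᵥ y = x ⬝ᵥ (Aᵀ *ᵥ y) :=
  calc (A *ᵥ x) ⬝ᵥ y = y ⬝ᵥ (A *ᵥ x) := dotProduct_comm _ _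
    _ = (y ᵥ* A) ⬝ᵥ x := dotProduct_mulVec _ _ _
    _ = (Aᵀ *ᵥ y) ⬝ᵥ x := by rw [Matrix.mulVec_transpose]
    _ = x ⬝ᵥ (Aᵀ *ᵥ y) := dotProduct_comm _ _

lemma delta_works (K F Δ : Mn) (hKs : K.IsSymm) (hΔs : Δ.IsSymm)
    (heq : Δ + (1/2:ℝ) • (Δ * K * Δ) = F)
    (S S' : (Fin n → ℝ) → ℝ)
    (hS : ∀ φ, S φ = (1 / 2) * ∑ i, φ i * (K.mulVec φ) i)
    (hS' : ∀ φ, S' φ = S φ + ∑ i, (K.mulVec φ) i * (F.mulVec (K.mulVec φ)) i)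
    (φ : Fin n → ℝ) : S' φ = S (φ + Δ.mulVec (K.mulVec φ)) := by
  have hsum : ∀ (a b : Fin n → ℝ), ∑ i, a i * b i = a ⬝ᵥ b := fun a b => rfl
  rw [hS', hS, hS, hsum, hsum, hsum]
  set ψ : Fin n → ℝ := Δ *ᵥ (K *ᵥ φ) with hψ
  have hΔK : (Δ * K)ᵀ = K * Δ := by rw [Matrix.transpose_mul, hKs, hΔs]
  have hψ2 : ψ = (Δ * K) *ᵥ φ := by rw [hψ, Matrix.mulVec_mulVec]
  have e1 : φ ⬝ᵥ (K *ᵥ ψ) = φ ⬝ᵥ ((K * Δ * K) *ᵥ φ) := by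
    rw [hψ, Matrix.mulVec_mulVec, Matrix.mulVec_mulVec, Matrix.mul_assoc]
  have e2 : ψ ⬝ᵥ (K *ᵥ φ) = φ ⬝ᵥ ((K * Δ * K) *ᵥ φ) := by
    rw [hψ2, dp, hΔK, Matrix.mulVec_mulVec]
  have e3 : ψ ⬝ᵥ (K *ᵥ ψ) = φ ⬝ᵥ ((K * Δ * K * Δ * K) *ᵥ φ) := by
    rw [hψ2, dp, hΔK]
    simp only [Matrix.mulVec_mulVec]
    simp only [Matrix.mul_assoc]
  have e4 : (K *ᵥ φ) ⬝ᵥ (F *ᵥ (K *ᵥ φ)) = φ ⬝ᵥ ((K * F * K) *ᵥ φ) := by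
    rw [dp, hKs]
    simp only [Matrix.mulVec_mulVec]
    simp only [Matrix.mul_assoc]
  have hKFK : K * F * K = K * Δ * K + (1/2:ℝ) • (K * Δ * K * Δ * K) := by
    rw [← heq]
    simp only [Matrix.mul_add, Matrix.add_mul, Matrix.mul_smul, Matrix.smul_mul,
      Matrix.mul_assoc]
  have e5 : φ ⬝ᵥ ((K * F * K) *ᵥ φ) =
      φ ⬝ᵥ ((K * Δ * K) *ᵥ φ) + (1/2) * (φ ⬝ᵥ ((K * Δ * K * Δ * K) *ᵥ φ)) := by
    rw [hKFK, Matrix.add_mulVec, dotProduct_add, Matrix.smul_mulVec,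
      dotProduct_smul]
    simp [smul_eq_mul]
  rw [Matrix.mulVec_add, dotProduct_add, add_dotProduct, add_dotProduct, e4, e5, e1, e2, e3]
  ring

lemma herm_of_symm {X : Mn} (h : X.IsSymm) : X.IsHermitian := by
  rwa [Matrix.IsHermitian, Matrix.conjTranspose_eq_transpose_of_trivial]

lemma symm_of_herm {X : Mn} (h : X.IsHermitian) : X.IsSymm := by
  rwa [Matrix.IsHermitian, Matrix.conjTranspose_eq_transpose_of_trivial] at h

lemma sqrt_posDef {A : Mn} (hA : A.PosDef) : hA.posSemidef.sqrt.PosDef := by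
  set R := hA.posSemidef.sqrt with hRdef
  have hRps : R.PosSemidef := hA.posSemidef.posSemidef_sqrt
  have hRR : R * R = A := hA.posSemidef.sqrt_mul_self
  have hdet : IsUnit R.det := by
    rw [isUnit_iff_ne_zero]
    intro h0
    have h1 := hA.det_pos
    rw [← hRR, Matrix.det_mul, h0, mul_zero] at h1
    exact lt_irrefl _ h1
  haveI : Invertible R := R.invertibleOfIsUnitDet hdet
  refine Matrix.posDef_iff_dotProduct_mulVec.mpr ⟨hRps.1, fun x hx => lt_of_le_of_ne ((Matrix.posSemidef_iff_dotProduct_mulVec.mp hRps).2 x) ?_⟩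
  intro h0
  have h1 : R *ᵥ x = 0 := (hRps.dotProduct_mulVec_zero_iff x).mp h0.symm
  have h2 : R⁻¹ *ᵥ (R *ᵥ x) = x := by
    rw [Matrix.mulVec_mulVec, Matrix.nonsing_inv_mul _ hdet, Matrix.one_mulVec]
  rw [h1, Matrix.mulVec_zero] at h2
  exact hx h2.symm

theorem stmt19' (K F : Matrix (Fin n) (Fin n) ℝ)
    (hKs : K.IsSymm) (hK : K.PosDef) (hFs : F.IsSymm)
    (hsmall : ‖LinearMap.toContinuousLinearMap (Matrix.toLin' F)‖ *
      ‖LinearMap.toContinuousLinearMap (Matrix.toLin' K)‖ < 1 / 4)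
    (S S' : (Fin n → ℝ) → ℝ)
    (hS : ∀ φ, S φ = (1 / 2) * ∑ i, φ i * (K.mulVec φ) i)
    (hS' : ∀ φ, S' φ = S φ + ∑ i, (K.mulVec φ) i * (F.mulVec (K.mulVec φ)) i) :
    (∃ Δ : Matrix (Fin n) (Fin n) ℝ, Δ.IsSymm ∧
      Δ + (1 / 2 : ℝ) • (Δ * K * Δ) = F ∧
      ∀ φ, S' φ = S (φ + Δ.mulVec (K.mulVec φ))) ∧
    (∀ Δ : Matrix (Fin n) (Fin n) ℝ, Δ.IsSymm →
      Δ + (1 / 2 : ℝ) • (Δ * K * Δ) = F →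
      ∀ φ, S' φ = S (φ + Δ.mulVec (K.mulVec φ))) ∧
    (K * F = F * K →
      ∃ R : Matrix (Fin n) (Fin n) ℝ, R.PosDef ∧
        R * R = 1 + (2 : ℝ) • (K * F) ∧
        (K⁻¹ * (R - 1)).IsSymm ∧
        (K⁻¹ * (R - 1)) + (1 / 2 : ℝ) • ((K⁻¹ * (R - 1)) * K * (K⁻¹ * (R - 1))) = F) := by
  classical
  -- operator norm bound on K * F
  have hKF : ‖LinearMap.toContinuousLinearMap (Matrix.toLin' (K * F))‖ < 1 / 4 := by
    have h1 := opnorm_mul_le K F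
    have h2 : (0:ℝ) ≤ ‖LinearMap.toContinuousLinearMap (Matrix.toLin' K)‖ := norm_nonneg _
    nlinarith [norm_nonneg (LinearMap.toContinuousLinearMap (Matrix.toLin' F))]
  have hKFbound : ∀ (t : ℝ) (v : Fin n → ℝ), v ≠ 0 → (K * F) *ᵥ v = t • v → |t| < 1/4 :=
    fun t v hv h => lt_of_le_of_lt (eig_bound _ t v hv h) hKF
  -- part 2
  have hpart2 : ∀ Δ : Matrix (Fin n) (Fin n) ℝ, Δ.IsSymm →
      Δ + (1 / 2 : ℝ) • (Δ * K * Δ) = F →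
      ∀ φ, S' φ = S (φ + Δ.mulVec (K.mulVec φ)) :=
    fun Δ h1 h2 => delta_works K F Δ hKs h1 h2 S S' hS hS'
  -- part 1 : construct Δ
  have hKps := hK.posSemidef
  set B : Mn := hKps.sqrt with hBdef
  have hBps : B.PosSemidef := hKps.posSemidef_sqrt
  have hBB : B * B = K := hKps.sqrt_mul_self
  have hBs : B.IsSymm := symm_of_herm hBps.1
  have hBpd : B.PosDef := sqrt_posDef hK
  have hBdet : IsUnit B.det := isUnit_iff_ne_zero.mpr hBpd.det_pos.ne'
  haveI : Invertible B := B.invertibleOfIsUnitDet hBdet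
  have hA1bound : ∀ (t : ℝ) (v : Fin n → ℝ), v ≠ 0 → (B * F * B) *ᵥ v = t • v → |t| < 1/4 := by
    intro t v hv h
    by_cases hw : B *ᵥ v = 0
    · have h0 : (B * F * B) *ᵥ v = 0 := by
        rw [← Matrix.mulVec_mulVec, hw, Matrix.mulVec_zero]
      rw [h0] at h
      rcases smul_eq_zero.mp h.symm with ht | hv'
      · rw [ht]; norm_num
      · exact absurd hv' hv
    · have h2 : (K * F) *ᵥ (B *ᵥ v) = t • (B *ᵥ v) := by
        have h3 : (K * F) *ᵥ (B *ᵥ v) = B *ᵥ ((B * F * B) *ᵥ v) := by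
          simp only [Matrix.mulVec_mulVec, ← hBB, Matrix.mul_assoc]
        rw [h3, h, Matrix.mulVec_smul]
      exact hKFbound t _ hw h2
  have hA1herm : (B * F * B).IsHermitian := by
    apply herm_of_symm
    rw [Matrix.IsSymm, Matrix.transpose_mul, Matrix.transpose_mul, hBs, hFs,
      Matrix.mul_assoc]
  set M : Mn := 1 + (2:ℝ) • (B * F * B) with hMdef
  have hM : M.PosDef := by
    apply posDef_one_add
    · apply Matrix.IsHermitian.add
      · exact herm_of_symm (by rw [Matrix.IsSymm, Matrix.transpose_smul, Matrix.transpose_one])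
      · exact herm_of_symm (by
          rw [Matrix.IsSymm, Matrix.transpose_smul, symm_of_herm hA1herm])
    · intro t v hv h
      have h1 : (B * F * B) *ᵥ v = (t/2) • v := by
        have h2 : ((2:ℝ) • (B * F * B)) *ᵥ v = (2:ℝ) • ((B * F * B) *ᵥ v) :=
          Matrix.smul_mulVec _ _ _
        rw [h2] at h
        calc (B * F * B) *ᵥ v = (1/2:ℝ) • ((2:ℝ) • ((B * F * B) *ᵥ v)) := by
              rw [smul_smul]; norm_num
          _ = (1/2:ℝ) • (t • v) := by rw [h]
          _ = (t/2) • v := by rw [smul_smul]; ring_nf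
      have h3 := hA1bound (t/2) v hv h1
      rw [abs_div] at h3
      have : |(2:ℝ)| = 2 := by norm_num
      rw [this] at h3
      linarith
  set Q : Mn := hM.posSemidef.sqrt with hQdef
  have hQps : Q.PosSemidef := hM.posSemidef.posSemidef_sqrt
  have hQQ : Q * Q = 1 + (2:ℝ) • (B * F * B) := hM.posSemidef.sqrt_mul_self
  have hQs : Q.IsSymm := symm_of_herm hQps.1
  have hBinvs : (B⁻¹).IsSymm := by
    rw [Matrix.IsSymm, Matrix.transpose_nonsing_inv, hBs]
  set Δ : Mn := B⁻¹ * (Q - 1) * B⁻¹ with hΔdef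
  have hΔs : Δ.IsSymm := by
    rw [Matrix.IsSymm, Matrix.transpose_mul, Matrix.transpose_mul, hBinvs,
      Matrix.transpose_sub, Matrix.transpose_one, hQs, hΔdef]
    simp only [Matrix.mul_assoc]
  have hΔeq : Δ + (1/2:ℝ) • (Δ * K * Δ) = F := by
    have h1 : Δ * K * Δ = B⁻¹ * ((Q - 1) * (Q - 1)) * B⁻¹ := by
      rw [hΔdef, ← hBB]
      simp only [Matrix.mul_assoc]
      rw [Matrix.inv_mul_cancel_left_of_invertible, Matrix.mul_inv_cancel_left_of_invertible]
    have hkey : (Q - 1) + (1/2:ℝ) • ((Q - 1) * (Q - 1)) = B * F * B := by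
      have hsq : (Q - 1) * (Q - 1) = Q * Q - Q - Q + 1 := by noncomm_ring
      rw [hsq, hQQ]
      module
    have hfactor : Δ + (1/2:ℝ) • (Δ * K * Δ) =
        B⁻¹ * ((Q - 1) + (1/2:ℝ) • ((Q - 1) * (Q - 1))) * B⁻¹ := by
      rw [h1, hΔdef]
      simp only [Matrix.mul_add, Matrix.add_mul, Matrix.mul_smul, Matrix.smul_mul]
    rw [hfactor, hkey]
    simp only [Matrix.mul_assoc]
    rw [Matrix.mul_nonsing_inv _ hBdet, Matrix.mul_one, Matrix.inv_mul_cancel_left_of_invertible]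
  refine ⟨⟨Δ, hΔs, hΔeq, hpart2 Δ hΔs hΔeq⟩, hpart2, ?_⟩
  -- part 3
  intro hcomm
  have hKdet : IsUnit K.det := isUnit_iff_ne_zero.mpr hK.det_pos.ne'
  haveI : Invertible K := K.invertibleOfIsUnitDet hKdet
  have hNs : ((1:Mn) + (2:ℝ) • (K * F)).IsHermitian := by
    apply herm_of_symm
    rw [Matrix.IsSymm, Matrix.transpose_add, Matrix.transpose_one, Matrix.transpose_smul,
      Matrix.transpose_mul, hKs, hFs, hcomm]
  have hN : ((1:Mn) + (2:ℝ) • (K * F)).PosDef := by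
    apply posDef_one_add
    · apply Matrix.IsHermitian.add
      · exact herm_of_symm (by rw [Matrix.IsSymm, Matrix.transpose_smul, Matrix.transpose_one])
      · exact herm_of_symm (by
          rw [Matrix.IsSymm, Matrix.transpose_smul, Matrix.transpose_mul, hKs, hFs, hcomm])
    · intro t v hv h
      have h1 : (K * F) *ᵥ v = (t/2) • v := by
        have h2 : ((2:ℝ) • (K * F)) *ᵥ v = (2:ℝ) • ((K * F) *ᵥ v) :=
          Matrix.smul_mulVec _ _ _
        rw [h2] at h
        calc (K * F) *ᵥ v = (1/2:ℝ) • ((2:ℝ) • ((K * F) *ᵥ v)) := by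
              rw [smul_smul]; norm_num
          _ = (1/2:ℝ) • (t • v) := by rw [h]
          _ = (t/2) • v := by rw [smul_smul]; ring_nf
      have h3 := hKFbound (t/2) v hv h1
      rw [abs_div] at h3
      have : |(2:ℝ)| = 2 := by norm_num
      rw [this] at h3
      linarith
  set R : Mn := hN.posSemidef.sqrt with hRdef
  have hRpd : R.PosDef := sqrt_posDef hN
  have hRR : R * R = 1 + (2:ℝ) • (K * F) := hN.posSemidef.sqrt_mul_self
  have hRs : R.IsSymm := symm_of_herm hRpd.1
  have hcommKN : Commute K ((1:Mn) + (2:ℝ) • (K * F)) := by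
    have hx : K * F * K = K * (K * F) := by rw [Matrix.mul_assoc, ← hcomm]
    show K * _ = _ * K
    simp only [Matrix.mul_add, Matrix.add_mul, Matrix.mul_one, Matrix.one_mul,
      Matrix.mul_smul, Matrix.smul_mul]
    rw [hx]
  have hcommKR : Commute K R := commute_sqrt hN.posSemidef hcommKN
  have hKR : K * R = R * K := hcommKR
  have hcommKiR : K⁻¹ * R = R * K⁻¹ := by
    calc K⁻¹ * R = K⁻¹ * R * (K * K⁻¹) := by
          rw [Matrix.mul_nonsing_inv _ hKdet, Matrix.mul_one]
      _ = K⁻¹ * ((R * K) * K⁻¹) := by simp only [Matrix.mul_assoc]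
      _ = K⁻¹ * ((K * R) * K⁻¹) := by rw [← hKR]
      _ = (K⁻¹ * K) * (R * K⁻¹) := by simp only [Matrix.mul_assoc]
      _ = R * K⁻¹ := by rw [Matrix.nonsing_inv_mul _ hKdet, Matrix.one_mul]
  have hKinvs : (K⁻¹).IsSymm := by
    rw [Matrix.IsSymm, Matrix.transpose_nonsing_inv, hKs]
  have hsymm3 : (K⁻¹ * (R - 1)).IsSymm := by
    rw [Matrix.IsSymm, Matrix.transpose_mul, Matrix.transpose_sub, Matrix.transpose_one,
      hRs, hKinvs, Matrix.sub_mul, Matrix.mul_sub, Matrix.one_mul, Matrix.mul_one, hcommKiR]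
  have heq3 : (K⁻¹ * (R - 1)) + (1/2:ℝ) • ((K⁻¹ * (R - 1)) * K * (K⁻¹ * (R - 1))) = F := by
    have h1 : (K⁻¹ * (R - 1)) * K * (K⁻¹ * (R - 1)) = K⁻¹ * ((R - 1) * (R - 1)) := by
      simp only [Matrix.mul_assoc]
      rw [Matrix.mul_inv_cancel_left_of_invertible]
    have hsq : (R - 1) * (R - 1) = R * R - R - R + 1 := by noncomm_ring
    rw [h1, hsq, hRR]
    have h2 : K⁻¹ * (K * F) = F := Matrix.inv_mul_cancel_left_of_invertible (A := K) F
    simp only [Matrix.mul_sub, Matrix.mul_add, Matrix.mul_one, Matrix.mul_smul, h2]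
    module
  exact ⟨R, hRpd, hRR, hsymm3, heq3⟩

end Stmt19Aux

/-- Quadratic special case of the field-redefinition theorem: for
`S(φ) = ½φᵀKφ` (`K` symmetric positive definite) and the perturbation
`S'(φ) = S(φ) + ∇S(φ)ᵀF∇S(φ)` with `F` symmetric and `‖F‖‖K‖ < 1/4`, there is
a symmetric `Δ` with `S'(φ) = S(φ + Δ∇S(φ))` for all `φ`, given by any
symmetric solution of `Δ + ½ΔKΔ = F`; moreover any such symmetric solution
works, and when `K` and `F` commute a solution `Δ = K⁻¹(R − 1)` exists with
`R` a positive square root of `1 + 2KF`. -/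
theorem stmt19 (n : ℕ) (K F : Matrix (Fin n) (Fin n) ℝ)
    (hKs : K.IsSymm) (hK : K.PosDef) (hFs : F.IsSymm)
    (hsmall : ‖LinearMap.toContinuousLinearMap (Matrix.toLin' F)‖ *
      ‖LinearMap.toContinuousLinearMap (Matrix.toLin' K)‖ < 1 / 4)
    (S S' : (Fin n → ℝ) → ℝ)
    (hS : ∀ φ, S φ = (1 / 2) * ∑ i, φ i * (K.mulVec φ) i)
    (hS' : ∀ φ, S' φ = S φ + ∑ i, (K.mulVec φ) i * (F.mulVec (K.mulVec φ)) i) :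
    (∃ Δ : Matrix (Fin n) (Fin n) ℝ, Δ.IsSymm ∧
      Δ + (1 / 2 : ℝ) • (Δ * K * Δ) = F ∧
      ∀ φ, S' φ = S (φ + Δ.mulVec (K.mulVec φ))) ∧
    (∀ Δ : Matrix (Fin n) (Fin n) ℝ, Δ.IsSymm →
      Δ + (1 / 2 : ℝ) • (Δ * K * Δ) = F →
      ∀ φ, S' φ = S (φ + Δ.mulVec (K.mulVec φ))) ∧
    (K * F = F * K →
      ∃ R : Matrix (Fin n) (Fin n) ℝ, R.PosDef ∧
        R * R = 1 + (2 : ℝ) • (K * F) ∧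
        (K⁻¹ * (R - 1)).IsSymm ∧
        (K⁻¹ * (R - 1)) + (1 / 2 : ℝ) • ((K⁻¹ * (R - 1)) * K * (K⁻¹ * (R - 1))) = F) := by
  exact stmt19' K F hKs hK hFs hsmall S S' hS hS'
end
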